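/- For a fixed formal power series c, the map d ↦ c ⧢ d is an ultrametric contraction on (ℝ⟨⟨X⟩⟩, dist) if c is proper (i.e., its constant term (c,∅) = 0 and c ≠ 0), and an isometry if c is not proper. -/

import Mathlib

/-- Shuffle product of formal power series (words to `ℝ`), via the left-quotient recursion. -/
noncomputable def shuffle {X : Type*} : (List X → ℝ) → (List X → ℝ) → List X → ℝ
  | c, d, [] => c [] * d []
  | c, d, x :: w => shuffle (fun u => c (x :: u)) d w + shuffle c (fun u => d (x :: u)) w

/-- Order of a series: minimal word length in the support, `⊤` for the zero series. -/
noncomputable def ord {X : Type*} (c : List X → ℝ) : ℕ∞ :=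
  sInf {n : ℕ∞ | ∃ w, c w ≠ 0 ∧ (w.length : ℕ∞) = n}

/-- `σ` raised to an extended-natural power, with `σ^⊤ = 0`. -/
noncomputable def upow (σ : ℝ) (n : ℕ∞) : ℝ :=
  if n = ⊤ then 0 else σ ^ n.toNat

/-- The ultrametric distance `dist(c,d) = σ^(ord (c-d))`. -/
noncomputable def udist {X : Type*} (σ : ℝ) (c d : List X → ℝ) : ℝ :=
  upow σ (ord (c - d))

/-! The order is superadditive under shuffle, `ord c + ord e ≤ ord (c ⧢ e)`: by the left-quotient
recursion each term of `(c ⧢ e, w)` pairs a coefficient of `c` with one of `e` at words whose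
lengths add up to `|w|`. A proper `c` has order at least one, which gives the contraction. If
`(c, ∅) ≠ 0`, then at a shortest word `w` in the support of `e` only one term survives,
`(c ⧢ e, w) = (c, ∅) (e, w) ≠ 0`, so `ord (c ⧢ e) = ord e`. Since `⧢` is bilinear,
`dist (c ⧢ d₁, c ⧢ d₂) = σ ^ ord (c ⧢ (d₁ - d₂))`. -/

section Shuffle

variable {X : Type*}

section Order

variable {c : List X → ℝ}

lemma ord_le_length {w : List X} (h : c w ≠ 0) : ord c ≤ w.length :=
  sInf_le ⟨w, h, rfl⟩

lemma apply_eq_zero_of_length_lt_ord {w : List X} (h : (w.length : ℕ∞) < ord c) : c w = 0 :=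
  not_not.1 fun hw => (ord_le_length hw).not_gt h

lemma le_ord {n : ℕ∞} (h : ∀ w, c w ≠ 0 → n ≤ w.length) : n ≤ ord c :=
  le_sInf <| by
    rintro _ ⟨w, hw, rfl⟩
    exact h w hw

lemma exists_length_eq_ord (h : c ≠ 0) : ∃ w, c w ≠ 0 ∧ (w.length : ℕ∞) = ord c := by
  obtain ⟨w, hw⟩ := Function.ne_iff.1 h
  exact csInf_mem (s := {n : ℕ∞ | ∃ w, c w ≠ 0 ∧ (w.length : ℕ∞) = n}) ⟨_, w, hw, rfl⟩

@[simp]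
lemma ord_zero : ord (0 : List X → ℝ) = ⊤ :=
  top_le_iff.1 <| le_ord fun _ hw => absurd rfl hw

lemma one_le_ord (h : c [] = 0) : 1 ≤ ord c :=
  le_ord fun w hw => by
    rcases w with _ | ⟨x, w⟩
    · exact absurd h hw
    · simp

lemma ord_le_ord_cons_add_one (x : X) : ord c ≤ ord (fun u => c (x :: u)) + 1 := by
  by_cases h : (fun u => c (x :: u)) = 0
  · simp [h]
  obtain ⟨w, hw, hlen⟩ := exists_length_eq_ord h
  rw [← hlen]
  exact_mod_cast ord_le_length (w := x :: w) hw

end Order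

lemma shuffle_sub (c d₁ d₂ : List X → ℝ) :
    shuffle c (d₁ - d₂) = shuffle c d₁ - shuffle c d₂ := by
  funext w
  induction w generalizing c d₁ d₂ with
  | nil => simp only [shuffle, Pi.sub_apply]; ring
  | cons x w ih =>
    simp only [Pi.sub_apply] at ih ⊢
    simp only [shuffle]
    rw [show (fun u => (d₁ - d₂) (x :: u)) = (fun u => d₁ (x :: u)) - (fun u => d₂ (x :: u)) from
      rfl, ih, ih]
    ring

lemma shuffle_apply_eq_zero_of_length_lt_ord_add_ord (c e : List X → ℝ) (w : List X)
    (h : (w.length : ℕ∞) < ord c + ord e) : shuffle c e w = 0 := by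
  induction w generalizing c e with
  | nil =>
    rcases eq_or_ne (c []) 0 with hc | hc
    · simp [shuffle, hc]
    have hc0 : ord c = 0 := nonpos_iff_eq_zero.1 (ord_le_length hc)
    rw [hc0, zero_add] at h
    simp [shuffle, apply_eq_zero_of_length_lt_ord h]
  | cons x w ih =>
    rw [List.length_cons, Nat.cast_succ] at h
    rw [shuffle, ih, ih, add_zero] <;> refine (ENat.add_lt_add_iff_right ENat.one_ne_top).1 ?_
    · calc (w.length : ℕ∞) + 1 < ord c + ord e := h
        _ ≤ ord c + (ord (fun u => e (x :: u)) + 1) := by gcongr; exact ord_le_ord_cons_add_one x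
        _ = ord c + ord (fun u => e (x :: u)) + 1 := (add_assoc _ _ _).symm
    · calc (w.length : ℕ∞) + 1 < ord c + ord e := h
        _ ≤ ord (fun u => c (x :: u)) + 1 + ord e := by gcongr; exact ord_le_ord_cons_add_one x
        _ = ord (fun u => c (x :: u)) + ord e + 1 := add_right_comm _ _ _

lemma add_ord_le_ord_shuffle (c e : List X → ℝ) : ord c + ord e ≤ ord (shuffle c e) :=
  le_ord fun w hw => not_lt.1 fun h => hw (shuffle_apply_eq_zero_of_length_lt_ord_add_ord c e w h)

lemma shuffle_apply_of_length_le_ord (c e : List X → ℝ) (w : List X)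
    (h : (w.length : ℕ∞) ≤ ord e) : shuffle c e w = c [] * e w := by
  induction w generalizing c e with
  | nil => rfl
  | cons x w ih =>
    rw [List.length_cons, Nat.cast_succ] at h
    have hquot : (w.length : ℕ∞) ≤ ord (fun u => e (x :: u)) :=
      (ENat.add_le_add_iff_right ENat.one_ne_top).1 (h.trans (ord_le_ord_cons_add_one x))
    have hleft : shuffle (fun u => c (x :: u)) e w = 0 :=
      shuffle_apply_eq_zero_of_length_lt_ord_add_ord _ _ _ <|
        (ENat.lt_add_one_iff (ENat.natCast_ne_top _)).2 le_rfl |>.trans_le (h.trans le_add_self)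
    rw [shuffle, hleft, zero_add, ih _ _ hquot]

lemma ord_shuffle_of_apply_nil_ne_zero {c : List X → ℝ} (hc : c [] ≠ 0) (e : List X → ℝ) :
    ord (shuffle c e) = ord e := by
  refine le_antisymm ?_ (le_add_self.trans (add_ord_le_ord_shuffle c e))
  rcases eq_or_ne e 0 with rfl | he
  · simp
  obtain ⟨w, hw, hlen⟩ := exists_length_eq_ord he
  refine hlen ▸ ord_le_length ?_
  rw [shuffle_apply_of_length_le_ord c e w hlen.le]
  exact mul_ne_zero hc hw

end Shuffle

section UPow

variable {σ : ℝ}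

@[simp]
lemma upow_top : upow σ ⊤ = 0 := if_pos rfl

@[simp]
lemma upow_natCast (n : ℕ) : upow σ n = σ ^ n := by
  simp [upow]

lemma upow_one_add (n : ℕ∞) : upow σ (1 + n) = σ * upow σ n := by
  cases n using ENat.recTopCoe with
  | top => simp
  | coe n => rw [← Nat.cast_one, ← Nat.cast_add, upow_natCast, upow_natCast, add_comm, pow_succ']

lemma upow_antitone (hσ0 : 0 ≤ σ) (hσ1 : σ ≤ 1) : Antitone (upow σ) := by
  intro m n hmn
  cases n using ENat.recTopCoe with
  | top =>
    cases m using ENat.recTopCoe with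
    | top => exact le_rfl
    | coe m => simpa using pow_nonneg hσ0 m
  | coe n =>
    lift m to ℕ using ne_top_of_le_ne_top (ENat.natCast_ne_top n) hmn
    simpa using pow_le_pow_of_le_one hσ0 hσ1 (by exact_mod_cast hmn)

end UPow

theorem shuffle_contraction_or_isometry_general {X : Type*} (σ : ℝ)
    (hσ0 : 0 < σ) (hσ1 : σ < 1) (c : List X → ℝ) :
    ((c [] = 0 ∧ c ≠ 0) →
        ∀ d₁ d₂ : List X → ℝ,
          udist σ (shuffle c d₁) (shuffle c d₂) ≤ σ * udist σ d₁ d₂) ∧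
    (c [] ≠ 0 →
        ∀ d₁ d₂ : List X → ℝ,
          udist σ (shuffle c d₁) (shuffle c d₂) = udist σ d₁ d₂) := by
  refine ⟨fun ⟨hc, _⟩ d₁ d₂ => ?_, fun hc d₁ d₂ => ?_⟩ <;> rw [udist, udist, ← shuffle_sub]
  · have hord : 1 + ord (d₁ - d₂) ≤ ord (shuffle c (d₁ - d₂)) :=
      (add_le_add_left (one_le_ord hc) _).trans (add_ord_le_ord_shuffle c _)
    exact (upow_antitone hσ0.le hσ1.le hord).trans_eq (upow_one_add _)
  · rw [ord_shuffle_of_apply_nil_ne_zero hc]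

/-- Shuffling with a fixed series `c` is a contraction if `c` is proper and an isometry otherwise. -/
theorem shuffle_contraction_or_isometry {X : Type*} [Fintype X] (σ : ℝ)
    (hσ0 : 0 < σ) (hσ1 : σ < 1) (c : List X → ℝ) :
    ((c [] = 0 ∧ c ≠ 0) →
        ∀ d₁ d₂ : List X → ℝ,
          udist σ (shuffle c d₁) (shuffle c d₂) ≤ σ * udist σ d₁ d₂) ∧
    (c [] ≠ 0 →
        ∀ d₁ d₂ : List X → ℝ,
          udist σ (shuffle c d₁) (shuffle c d₂) = udist σ d₁ d₂) :=
  shuffle_contraction_or_isometry_general σ hσ0 hσ1 c
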